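/- arXiv:math/9307218 — 7 statements merged into one kernel-verified Lean document; each statement's English description precedes it below -/
import Mathlib

section
/- Let W, V be fixed polynomials and let (Θ_n)_{n ≥ 0}, (Ω_n)_{n ≥ 0} be sequences of polynomials and (a_n), (b_n) scalar sequences satisfying Ω_0 = V, Ω_{n+1}(z) = (z - b_n) Θ_n(z) - Ω_n(z) for all n ≥ 0, and (z - b_n)(Ω_{n+1}(z) - Ω_n(z)) = W(z) + a_{n+1}^2 Θ_{n+1}(z) - a_n^2 Θ_{n-1}(z) for all n ≥ 1, together with Ω_1^2 - a_1^2 Θ_1 Θ_0 = V^2 + W Θ_0 (the case n = 1). Then for every n ≥ 1, Ω_n(z)^2 - a_n^2 Θ_n(z) Θ_{n-1}(z) = V(z)^2 + W(z) (Θ_0(z) + Θ_1(z) + ... + Θ_{n-1}(z)). -/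
open Polynomial

theorem Finset.eq_add_sum_range_of_sub_eq {M : Type*} [AddCommGroup M] {f g : ℕ → M} {c : M}
    (hone : f 1 = c + g 0) (hstep : ∀ n, 1 ≤ n → f (n + 1) - f n = g n) :
    ∀ n, 1 ≤ n → f n = c + ∑ i ∈ Finset.range n, g i := by
  intro n hn
  induction n, hn using Nat.le_induction with
  | base => simpa using hone
  | succ n hn ih => rw [Finset.sum_range_succ, ← add_assoc, ← ih, ← hstep n hn, add_sub_cancel]

theorem sq_sub_mul_succ_sub_sq_sub_mul {R : Type*} [CommRing R] {ω θ A c : ℕ → R} {w : R} {n : ℕ}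
    (hrec : ω (n + 1) = c n * θ n - ω n)
    (hrel : c n * (ω (n + 1) - ω n) = w + A (n + 1) * θ (n + 1) - A n * θ (n - 1)) :
    (ω (n + 1) ^ 2 - A (n + 1) * θ (n + 1) * θ n) - (ω n ^ 2 - A n * θ n * θ (n - 1)) =
      w * θ n := by
  have hsum : ω (n + 1) + ω n = c n * θ n := by rw [hrec]; ring
  -- `ω (n+1)² - ω n² = (ω (n+1) + ω n) (ω (n+1) - ω n) = θ n · c n (ω (n+1) - ω n)`
  linear_combination (ω (n + 1) - ω n) * hsum + θ n * hrel

theorem omega_theta_sum_identity_general (W V : Polynomial ℝ) (Θ Ω : ℕ → Polynomial ℝ)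
    (a b : ℕ → ℝ)
    (h16 : ∀ n, Ω (n + 1) = (X - C (b n)) * Θ n - Ω n)
    (h19 : ∀ n, 1 ≤ n →
      (X - C (b n)) * (Ω (n + 1) - Ω n) =
        W + C ((a (n + 1)) ^ 2) * Θ (n + 1) - C ((a n) ^ 2) * Θ (n - 1))
    (hbase : (Ω 1) ^ 2 - C ((a 1) ^ 2) * Θ 1 * Θ 0 = V ^ 2 + W * Θ 0) :
    ∀ n, 1 ≤ n →
      (Ω n) ^ 2 - C ((a n) ^ 2) * Θ n * Θ (n - 1) =
        V ^ 2 + W * ∑ i ∈ Finset.range n, Θ i := by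
  have hstep : ∀ n, 1 ≤ n →
      (Ω (n + 1) ^ 2 - C (a (n + 1) ^ 2) * Θ (n + 1) * Θ n) -
        (Ω n ^ 2 - C (a n ^ 2) * Θ n * Θ (n - 1)) = W * Θ n := fun n hn =>
    sq_sub_mul_succ_sub_sq_sub_mul (A := fun n => C (a n ^ 2)) (c := fun n => X - C (b n))
      (h16 n) (h19 n hn)
  simpa only [Finset.mul_sum] using
    Finset.eq_add_sum_range_of_sub_eq (f := fun n => Ω n ^ 2 - C (a n ^ 2) * Θ n * Θ (n - 1))
      hbase hstep

/-- Relations (16) and (19) imply (20):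
`Ω_n² - a_n² Θ_n Θ_{n-1} = V² + W (Θ_0 + ⋯ + Θ_{n-1})`. -/
theorem omega_theta_sum_identity (W V : Polynomial ℝ) (Θ Ω : ℕ → Polynomial ℝ)
    (a b : ℕ → ℝ)
    (h0 : Ω 0 = V)
    (h16 : ∀ n, Ω (n + 1) = (X - C (b n)) * Θ n - Ω n)
    (h19 : ∀ n, 1 ≤ n →
      (X - C (b n)) * (Ω (n + 1) - Ω n) =
        W + C ((a (n + 1)) ^ 2) * Θ (n + 1) - C ((a n) ^ 2) * Θ (n - 1))
    (hbase : (Ω 1) ^ 2 - C ((a 1) ^ 2) * Θ 1 * Θ 0 = V ^ 2 + W * Θ 0) :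
    ∀ n, 1 ≤ n →
      (Ω n) ^ 2 - C ((a n) ^ 2) * Θ n * Θ (n - 1) =
        V ^ 2 + W * ∑ i ∈ Finset.range n, Θ i :=
  omega_theta_sum_identity_general W V Θ Ω a b h16 h19 hbase
end

section
/- Let μ be a finite positive measure on ℝ such that all moments of e^{-t x^2} dμ(x) exist and are differentiable in t, let (p_n(·;t)) be the orthonormal polynomials for dσ_t(x) = e^{-t x^2} dμ(x) with positive leading coefficients γ_n(t), and suppose μ is even so the recurrence coefficients b_n vanish. Then d/dt (1/γ_n(t)^2) = -(a_n(t)^2 + a_{n+1}(t)^2) / γ_n(t)^2, where a_n are the recurrence coefficients in a_{n+1} p_{n+1} = x p_n - a_n p_{n-1}. -/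
/-!
Differentiating the normalisation `∫ p_n(x;t)² e^{-t x²} dμ(x) = 1` in `t` gives
`2 ∫ p_n ∂ₜp_n dσ_t = ∫ x² p_n² dσ_t`. Since `∂ₜp_n = (γ_n'/γ_n) p_n + (lower degree)`,
orthogonality turns the left side into `2 γ_n'/γ_n`, and the three-term recurrence
`x p_n = a_{n+1} p_{n+1} + a_n p_{n-1}` turns the right side into `a_n² + a_{n+1}²`.
Hence `(1/γ_n²)' = -2 γ_n'/γ_n³ = -(a_n² + a_{n+1}²)/γ_n²`.
-/

open MeasureTheory Polynomial

namespace LinearMap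

variable {K : Type*} [Field K] (L : K[X] →ₗ[K] K) {P : ℕ → K[X]}

theorem map_eq_zero_of_degree_lt (hP : ∀ k, (P k).degree = k) {n : ℕ}
    (hL : ∀ k < n, L (P k) = 0) {r : K[X]} (hr : r.degree < n) : L r = 0 := by
  let S : Sequence K := ⟨P, hP⟩
  have hspan : degreeLT K n ≤ ker L := by
    rw [← S.span_degreeLT fun i _ => (leadingCoeff_ne_zero.2 (S.ne_zero i)).isUnit,
      Submodule.span_le]
    rintro _ ⟨k, hk, rfl⟩
    exact hL k hk
  exact hspan (mem_degreeLT.2 hr)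

theorem map_mul_eq_coeff_div_leadingCoeff (hP : ∀ k, (P k).degree = k)
    (horth : ∀ k m, L (P k * P m) = if k = m then 1 else 0) {n : ℕ} {q : K[X]}
    (hq : q.natDegree ≤ n) :
    L (P n * q) = q.coeff n / (P n).leadingCoeff := by
  have hPn : (P n).coeff n = (P n).leadingCoeff := by
    rw [leadingCoeff, natDegree_eq_of_degree_eq_some (hP n)]
  have hlc : (P n).leadingCoeff ≠ 0 := leadingCoeff_ne_zero.2 fun h => by simpa [h] using hP n
  set c := q.coeff n / (P n).leadingCoeff
  have hrem : (q - c • P n).degree < n := by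
    refine (degree_lt_iff_coeff_zero _ _).2 fun m hm => ?_
    rcases (Nat.cast_le.1 hm).eq_or_lt with rfl | hlt
    · simp [c, hPn, hlc]
    · simp [coeff_eq_zero_of_natDegree_lt (hq.trans_lt hlt),
        coeff_eq_zero_of_degree_lt ((hP n).trans_lt (Nat.cast_lt.2 hlt))]
  have hlow : L (P n * (q - c • P n)) = 0 :=
    (L ∘ₗ mulLeft K (P n)).map_eq_zero_of_degree_lt hP
      (fun k hk => by simp [horth, hk.ne']) hrem
  rw [mul_sub, map_sub, mul_smul_comm, map_smul, horth, if_pos rfl, sub_eq_zero] at hlow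
  simpa using hlow

theorem map_X_sq_mul_self (horth : ∀ k m, L (P k * P m) = if k = m then 1 else 0)
    {a : ℕ → K} {n : ℕ}
    (hrec : X * P n = C (a (n + 1)) * P (n + 1) + C (a n) * P (n - 1)) :
    L (X ^ 2 * (P n * P n)) = a n ^ 2 + a (n + 1) ^ 2 := by
  have hsq : X ^ 2 * (P n * P n) = a (n + 1) ^ 2 • (P (n + 1) * P (n + 1)) +
      (2 * a n * a (n + 1)) • (P (n + 1) * P (n - 1)) + a n ^ 2 • (P (n - 1) * P (n - 1)) := by
    simp only [smul_eq_C_mul, map_pow, map_mul, map_ofNat]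
    linear_combination (X * P n + C (a (n + 1)) * P (n + 1) + C (a n) * P (n - 1)) * hrec
  have hne : n + 1 ≠ n - 1 := by omega
  simp only [hsq, map_add, map_smul, horth, hne, ↓reduceIte, smul_eq_mul, mul_one, mul_zero,
    add_zero]
  ring

end LinearMap

theorem hasDerivAt_coeff_mul {P Q : ℝ → ℝ[X]} {P' Q' : ℝ[X]} {t : ℝ}
    (hP : ∀ k, HasDerivAt (fun s => (P s).coeff k) (P'.coeff k) t)
    (hQ : ∀ k, HasDerivAt (fun s => (Q s).coeff k) (Q'.coeff k) t) (k : ℕ) :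
    HasDerivAt (fun s => (P s * Q s).coeff k) ((P' * Q t + P t * Q').coeff k) t := by
  simp_rw [coeff_add, coeff_mul, ← Finset.sum_add_distrib]
  exact HasDerivAt.fun_sum fun ij _ => (hP ij.1).mul (hQ ij.2)

theorem exists_hasDerivAt_coeff {Q : ℝ → ℝ[X]} {n : ℕ} {t : ℝ}
    (hdeg : ∀ s, (Q s).natDegree ≤ n)
    (hdiff : ∀ k, DifferentiableAt ℝ (fun s => (Q s).coeff k) t) :
    ∃ Q' : ℝ[X], ∀ k, HasDerivAt (fun s => (Q s).coeff k) (Q'.coeff k) t := by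
  refine ⟨∑ i ∈ Finset.range (n + 1), monomial i (deriv (fun s => (Q s).coeff i) t),
    fun k => ?_⟩
  simp only [finsetSum_coeff, coeff_monomial, Finset.sum_ite_eq', Finset.mem_range]
  split_ifs with hk
  · exact (hdiff k).hasDerivAt
  · have hzero : (fun s => (Q s).coeff k) = fun _ => 0 :=
      funext fun s => coeff_eq_zero_of_natDegree_lt ((hdeg s).trans_lt (by omega))
    rw [hzero]
    exact hasDerivAt_const t 0

theorem natDegree_le_of_hasDerivAt_coeff {Q : ℝ → ℝ[X]} {Q' : ℝ[X]} {n : ℕ} {t : ℝ}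
    (hdeg : ∀ s, (Q s).natDegree ≤ n)
    (hQ' : ∀ k, HasDerivAt (fun s => (Q s).coeff k) (Q'.coeff k) t) : Q'.natDegree ≤ n := by
  refine natDegree_le_iff_coeff_eq_zero.2 fun k hk => (hQ' k).unique ?_
  have hzero : (fun s => (Q s).coeff k) = fun _ => 0 :=
    funext fun s => coeff_eq_zero_of_natDegree_lt ((hdeg s).trans_lt hk)
  exact hzero ▸ hasDerivAt_const t 0

section Moments

variable {μ : Measure ℝ} {f : ℝ → ℝ}

theorem integrable_eval_mul (hf : ∀ k : ℕ, Integrable (fun x => x ^ k * f x) μ) (q : ℝ[X]) :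
    Integrable (fun x => q.eval x * f x) μ := by
  simp_rw [eval_eq_sum_range, Finset.sum_mul, mul_assoc]
  exact integrable_finsetSum _ fun k _ => (hf k).const_mul _

theorem integral_eval_mul_eq_sum (hf : ∀ k : ℕ, Integrable (fun x => x ^ k * f x) μ)
    {q : ℝ[X]} {N : ℕ} (hN : q.natDegree < N) :
    ∫ x, q.eval x * f x ∂μ =
      ∑ k ∈ Finset.range N, q.coeff k * ∫ x, x ^ k * f x ∂μ := by
  simp_rw [eval_eq_sum_range' hN, Finset.sum_mul, mul_assoc]
  rw [integral_finsetSum _ fun k _ => (hf k).const_mul _]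
  simp_rw [integral_const_mul]

variable (μ f) in
noncomputable def momentFunctional (hf : ∀ k : ℕ, Integrable (fun x => x ^ k * f x) μ) :
    ℝ[X] →ₗ[ℝ] ℝ where
  toFun q := ∫ x, q.eval x * f x ∂μ
  map_add' p q := by
    simp only [eval_add, add_mul]
    exact integral_add (integrable_eval_mul hf p) (integrable_eval_mul hf q)
  map_smul' c q := by
    simp only [eval_smul, smul_eq_mul, mul_assoc, integral_const_mul, RingHom.id_apply]

theorem momentFunctional_apply (hf : ∀ k : ℕ, Integrable (fun x => x ^ k * f x) μ)
    (q : ℝ[X]) :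
    momentFunctional μ f hf q = ∫ x, q.eval x * f x ∂μ :=
  rfl

theorem momentFunctional_X_sq_mul (hf : ∀ k : ℕ, Integrable (fun x => x ^ k * f x) μ)
    {q : ℝ[X]} {N : ℕ} (hN : q.natDegree < N) :
    momentFunctional μ f hf (X ^ 2 * q) =
      ∑ k ∈ Finset.range N, q.coeff k * ∫ x, x ^ (k + 2) * f x ∂μ := by
  have hmul : ∀ (k : ℕ) (x : ℝ), x ^ k * (x ^ 2 * f x) = x ^ (k + 2) * f x :=
    fun k x => by ring
  have hf₂ : ∀ k : ℕ, Integrable (fun x => x ^ k * (x ^ 2 * f x)) μ := by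
    simpa only [hmul] using fun k => hf (k + 2)
  calc momentFunctional μ f hf (X ^ 2 * q) = ∫ x, q.eval x * (x ^ 2 * f x) ∂μ := by
        simp only [momentFunctional_apply, eval_mul, eval_pow, eval_X, mul_assoc, mul_left_comm]
    _ = ∑ k ∈ Finset.range N, q.coeff k * ∫ x, x ^ k * (x ^ 2 * f x) ∂μ :=
        integral_eval_mul_eq_sum hf₂ hN
    _ = _ := by simp only [hmul]

theorem hasDerivAt_momentFunctional {w : ℝ → ℝ → ℝ}
    (hw : ∀ (k : ℕ) (s : ℝ), Integrable (fun x => x ^ k * w s x) μ) {t : ℝ}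
    (hmom : ∀ k : ℕ, HasDerivAt (fun s => ∫ x, x ^ k * w s x ∂μ)
      (-∫ x, x ^ (k + 2) * w t x ∂μ) t)
    {Q : ℝ → ℝ[X]} {Q' : ℝ[X]} {n : ℕ} (hdeg : ∀ s, (Q s).natDegree ≤ n)
    (hQ' : ∀ k, HasDerivAt (fun s => (Q s).coeff k) (Q'.coeff k) t) :
    HasDerivAt (fun s => momentFunctional μ (w s) (hw · s) (Q s))
      (momentFunctional μ (w t) (hw · t) Q' -
        momentFunctional μ (w t) (hw · t) (X ^ 2 * Q t)) t := by
  have hN : ∀ s, (Q s).natDegree < n + 1 := fun s => Nat.lt_succ_of_le (hdeg s)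
  have hN' : Q'.natDegree < n + 1 :=
    Nat.lt_succ_of_le (natDegree_le_of_hasDerivAt_coeff hdeg hQ')
  have hexp : (fun s => momentFunctional μ (w s) (hw · s) (Q s)) =
      fun s => ∑ k ∈ Finset.range (n + 1), (Q s).coeff k * ∫ x, x ^ k * w s x ∂μ :=
    funext fun s => integral_eval_mul_eq_sum (hw · s) (hN s)
  rw [hexp, momentFunctional_apply, integral_eval_mul_eq_sum (hw · t) hN',
    momentFunctional_X_sq_mul (hw · t) (hN t), ← Finset.sum_sub_distrib]
  refine (HasDerivAt.fun_sum fun k _ => (hQ' k).fun_mul (hmom k)).congr_deriv ?_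
  refine Finset.sum_congr rfl fun k _ => ?_
  ring

theorem momentFunctional_X_sq_mul_self_eq {w : ℝ → ℝ → ℝ}
    (hw : ∀ (k : ℕ) (s : ℝ), Integrable (fun x => x ^ k * w s x) μ) {t : ℝ}
    (hmom : ∀ k : ℕ, HasDerivAt (fun s => ∫ x, x ^ k * w s x ∂μ)
      (-∫ x, x ^ (k + 2) * w t x ∂μ) t)
    {Q : ℝ → ℝ[X]} {Q' : ℝ[X]} {n : ℕ} (hdeg : ∀ s, (Q s).natDegree ≤ n)
    (hQ' : ∀ k, HasDerivAt (fun s => (Q s).coeff k) (Q'.coeff k) t)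
    (hnorm : ∀ s, momentFunctional μ (w s) (hw · s) (Q s * Q s) = 1) :
    momentFunctional μ (w t) (hw · t) (X ^ 2 * (Q t * Q t)) =
      2 * momentFunctional μ (w t) (hw · t) (Q t * Q') := by
  have hderiv := hasDerivAt_momentFunctional hw hmom
    (fun s => natDegree_mul_le.trans (add_le_add (hdeg s) (hdeg s)))
    (hasDerivAt_coeff_mul hQ' hQ')
  simp only [hnorm] at hderiv
  have hzero := hderiv.unique (hasDerivAt_const t 1)
  rw [map_add, mul_comm Q'] at hzero
  linarith

end Moments

theorem deriv_one_div_sq {g : ℝ → ℝ} {g' t : ℝ} (hg : HasDerivAt g g' t) (hgt : g t ≠ 0) :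
    deriv (fun s => 1 / g s ^ 2) t = -(2 * (g' / g t) / g t ^ 2) := by
  simp_rw [one_div]
  rw [((hg.fun_pow 2).fun_inv (pow_ne_zero 2 hgt)).deriv]
  field_simp
  ring

theorem deriv_inv_gamma_sq_general (μ : Measure ℝ)
    (P : ℕ → ℝ → Polynomial ℝ) (γ a : ℕ → ℝ → ℝ) (n : ℕ)
    (hint : ∀ (k : ℕ) (t : ℝ), Integrable (fun x => x ^ k * Real.exp (-t * x ^ 2)) μ)
    (hmom : ∀ (k : ℕ) (t : ℝ),
      HasDerivAt (fun s => ∫ x, x ^ k * Real.exp (-s * x ^ 2) ∂μ)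
        (-∫ x, x ^ (k + 2) * Real.exp (-t * x ^ 2) ∂μ) t)
    (hdeg : ∀ k t, (P k t).natDegree = k)
    (hlead : ∀ k t, (P k t).leadingCoeff = γ k t)
    (hcoeff : ∀ k i, Differentiable ℝ (fun t => (P k t).coeff i))
    (horth : ∀ k m t,
      ∫ x, (P k t).eval x * (P m t).eval x * Real.exp (-t * x ^ 2) ∂μ =
        if k = m then 1 else 0)
    (hrec : ∀ (k : ℕ) (t x : ℝ),
      a (k + 1) t * (P (k + 1) t).eval x =
        x * (P k t).eval x - a k t * (P (k - 1) t).eval x) :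
    ∀ t, deriv (fun s => 1 / (γ n s) ^ 2) t =
      -(((a n t) ^ 2 + (a (n + 1) t) ^ 2) / (γ n t) ^ 2) := by
  intro t
  set L : ℝ → ℝ[X] →ₗ[ℝ] ℝ := fun s =>
    momentFunctional μ (fun x => Real.exp (-s * x ^ 2)) (hint · s)
  have hL : ∀ s k m, L s (P k s * P m s) = if k = m then 1 else 0 := fun s k m => by
    simpa only [L, momentFunctional_apply, eval_mul] using horth k m s
  have hdegree : ∀ s k, (P k s).degree = k := fun s k => by
    have hne : P k s ≠ 0 := fun h => by simpa [h] using hL s k k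
    rw [degree_eq_natDegree hne, hdeg]
  have hγne : γ n t ≠ 0 := by
    rw [← hlead]
    exact leadingCoeff_ne_zero.2 fun h => by simpa [h] using hdegree t n
  have hrecX : X * P n t = C (a (n + 1) t) * P (n + 1) t + C (a n t) * P (n - 1) t :=
    Polynomial.funext fun x => by
      simp only [eval_mul, eval_add, eval_X, eval_C]
      linarith [hrec n t x]
  obtain ⟨P', hP'⟩ := exists_hasDerivAt_coeff (fun s => (hdeg n s).le) fun k => hcoeff n k t
  have hγ : HasDerivAt (γ n) (P'.coeff n) t := by
    have hγ_eq : γ n = fun s => (P n s).coeff n :=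
      funext fun s => by rw [← hlead, leadingCoeff, hdeg]
    exact hγ_eq ▸ hP' n
  have hkey : a n t ^ 2 + a (n + 1) t ^ 2 = 2 * (P'.coeff n / γ n t) := by
    have h := momentFunctional_X_sq_mul_self_eq (w := fun s x => Real.exp (-s * x ^ 2)) hint
      (hmom · t) (fun s => (hdeg n s).le) hP' (fun s => (hL s n n).trans (if_pos rfl))
    rwa [(L t).map_X_sq_mul_self (P := (P · t)) (a := (a · t)) (hL t) hrecX,
      (L t).map_mul_eq_coeff_div_leadingCoeff (P := (P · t)) (hdegree t) (hL t)
        (natDegree_le_of_hasDerivAt_coeff (fun s => (hdeg n s).le) hP'), hlead] at h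
  rw [deriv_one_div_sq hγ hγne, hkey]

/-- For orthonormal polynomials of the even measure `e^{-t x²} dμ(x)` with positive
leading coefficients `γ_n(t)` and recurrence `a_{n+1} p_{n+1} = x p_n - a_n p_{n-1}`,
one has `d/dt (1/γ_n²) = -(a_n² + a_{n+1}²)/γ_n²`. -/
theorem deriv_inv_gamma_sq (μ : Measure ℝ) [IsFiniteMeasure μ]
    (P : ℕ → ℝ → Polynomial ℝ) (γ a : ℕ → ℝ → ℝ) (n : ℕ) (hn : 1 ≤ n)
    (heven : μ.map (fun x => -x) = μ)
    (hint : ∀ (k : ℕ) (t : ℝ), Integrable (fun x => x ^ k * Real.exp (-t * x ^ 2)) μ)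
    (hmom : ∀ (k : ℕ) (t : ℝ),
      HasDerivAt (fun s => ∫ x, x ^ k * Real.exp (-s * x ^ 2) ∂μ)
        (-∫ x, x ^ (k + 2) * Real.exp (-t * x ^ 2) ∂μ) t)
    (hdeg : ∀ k t, (P k t).natDegree = k)
    (hlead : ∀ k t, (P k t).leadingCoeff = γ k t)
    (hγpos : ∀ k t, 0 < γ k t)
    (hγdiff : ∀ k, Differentiable ℝ (γ k))
    (hcoeff : ∀ k i, Differentiable ℝ (fun t => (P k t).coeff i))
    (horth : ∀ k m t,
      ∫ x, (P k t).eval x * (P m t).eval x * Real.exp (-t * x ^ 2) ∂μ =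
        if k = m then 1 else 0)
    (ha0 : ∀ t, a 0 t = 0)
    (hrec : ∀ (k : ℕ) (t x : ℝ),
      a (k + 1) t * (P (k + 1) t).eval x =
        x * (P k t).eval x - a k t * (P (k - 1) t).eval x) :
    ∀ t, deriv (fun s => 1 / (γ n s) ^ 2) t =
      -(((a n t) ^ 2 + (a (n + 1) t) ^ 2) / (γ n t) ^ 2) :=
  deriv_inv_gamma_sq_general μ P γ a n hint hmom hdeg hlead hcoeff horth hrec
end

section
/- Fix n ≥ 1 and t-dependent functions u_{n-1}, u_n, u_{n+1}, u_{n+2} (and u_{n-2} when n ≥ 2; set u_0 arbitrary with u_0 ≡ 0 when n = 1), all differentiable and with u_n nowhere zero. Assume the Freud string equations u_k (u_{k-1} + u_k + u_{k+1}) + 2t u_k = k hold for k = n-1, n, n+1, and the Langmuir flow u_k' = u_k (u_{k-1} - u_{k+1}) holds for k = n-1, n, n+1. Then u_n satisfies the fourth Painlevé equation u_n'' = (u_n')^2/(2 u_n) + (1/(2 u_n)) (3 u_n^2 + 2 t u_n - n)(u_n^2 + 2 t u_n + n). -/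
/-!
Differentiating the flow `u_n' = u_n (u_{n-1} - u_{n+1})` gives
`u_n'' = u_n' (u_{n-1} - u_{n+1}) + u_n (u_{n-1}' - u_{n+1}')`. At `k = n ∓ 1` the string equation
lets one trade the outer neighbour `u_{n-2}` (resp. `u_{n+2}`) in the flow for the inner ones, so
`u_{n-1}'` and `u_{n+1}'` are polynomials in `u_{n-1}, u_n, u_{n+1}, t`. Writing `n` itself as
`u_n (u_{n-1} + u_n + u_{n+1}) + 2 t u_n` (the string equation at `k = n`), Painlevé IV becomes a
rational identity in `u_{n-1}, u_n, u_{n+1}, t`.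
-/

section StringEquation

variable {p m q d t k : ℝ}

theorem flow_eq_of_string_elim_prev (hs : m * (p + m + q) + 2 * t * m = k) (hf : d = m * (p - q)) :
    d = k - 2 * t * m - m ^ 2 - 2 * m * q := by
  linear_combination hf + hs

theorem flow_eq_of_string_elim_next (hs : m * (p + m + q) + 2 * t * m = k) (hf : d = m * (p - q)) :
    d = 2 * p * m + m ^ 2 + 2 * t * m - k := by
  linear_combination hf - hs

end StringEquation

theorem deriv_deriv_of_deriv_eq_mul_sub {a b c : ℝ → ℝ} {t : ℝ} (ha : DifferentiableAt ℝ a t)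
    (hb : DifferentiableAt ℝ b t) (hc : DifferentiableAt ℝ c t)
    (hflow : deriv b = fun s => b s * (a s - c s)) :
    deriv (deriv b) t = deriv b t * (a t - c t) + b t * (deriv a t - deriv c t) := by
  conv_lhs => rw [hflow]
  rw [deriv_fun_mul hb (ha.fun_sub hc), deriv_fun_sub ha hc, hflow]

theorem painleveIV_of_string_of_flow {a b c : ℝ → ℝ} {κ t : ℝ} (ha : DifferentiableAt ℝ a t)
    (hb : DifferentiableAt ℝ b t) (hc : DifferentiableAt ℝ c t) (hb0 : b t ≠ 0)
    (hflow : deriv b = fun s => b s * (a s - c s))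
    (ha' : deriv a t = κ - 1 - 2 * t * a t - a t ^ 2 - 2 * a t * b t)
    (hc' : deriv c t = 2 * b t * c t + c t ^ 2 + 2 * t * c t - (κ + 1))
    (hstring : b t * (a t + b t + c t) + 2 * t * b t = κ) :
    deriv (deriv b) t = (deriv b t) ^ 2 / (2 * b t) +
      (1 / (2 * b t)) * (3 * (b t) ^ 2 + 2 * t * b t - κ) * ((b t) ^ 2 + 2 * t * b t + κ) := by
  rw [deriv_deriv_of_deriv_eq_mul_sub ha hb hc hflow, ha', hc', congrFun hflow t, ← hstring]
  field_simp
  ring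

theorem painleveIV_from_freud_general (n : ℕ) (hn : 1 ≤ n) (u : ℕ → ℝ → ℝ)
    (hne : ∀ t, u n t ≠ 0)
    (hdiff : ∀ k ∈ Finset.Icc (n - 1) (n + 1), Differentiable ℝ (u k))
    (hstring : ∀ t : ℝ, ∀ k ∈ Finset.Icc (n - 1) (n + 1),
      u k t * (u (k - 1) t + u k t + u (k + 1) t) + 2 * t * u k t = k)
    (hflow : ∀ t : ℝ, ∀ k ∈ Finset.Icc (n - 1) (n + 1),
      deriv (u k) t = u k t * (u (k - 1) t - u (k + 1) t)) :
    ∀ t : ℝ, deriv (deriv (u n)) t =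
      (deriv (u n) t) ^ 2 / (2 * u n t) +
        (1 / (2 * u n t)) * (3 * (u n t) ^ 2 + 2 * t * u n t - n) *
          ((u n t) ^ 2 + 2 * t * u n t + n) := by
  intro t
  have hprev : n - 1 ∈ Finset.Icc (n - 1) (n + 1) := Finset.mem_Icc.mpr ⟨le_rfl, by omega⟩
  have hcur : n ∈ Finset.Icc (n - 1) (n + 1) := Finset.mem_Icc.mpr ⟨Nat.sub_le n 1, by omega⟩
  have hnext : n + 1 ∈ Finset.Icc (n - 1) (n + 1) := Finset.mem_Icc.mpr ⟨by omega, le_rfl⟩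
  have hs_prev := hstring t (n - 1) hprev
  have hf_prev := hflow t (n - 1) hprev
  rw [Nat.sub_add_cancel hn] at hs_prev hf_prev
  rw [Nat.cast_pred hn] at hs_prev
  have hs_next := hstring t (n + 1) hnext
  have hf_next := hflow t (n + 1) hnext
  rw [Nat.add_sub_cancel] at hs_next hf_next
  rw [Nat.cast_succ] at hs_next
  exact painleveIV_of_string_of_flow (hdiff _ hprev t) (hdiff _ hcur t) (hdiff _ hnext t) (hne t)
    (funext fun s => hflow s n hcur) (flow_eq_of_string_elim_prev hs_prev hf_prev)
    (flow_eq_of_string_elim_next hs_next hf_next) (hstring t n hcur)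

/-- Freud string equations plus the Langmuir flow imply the fourth Painlevé equation
for `u_n = a_n²` (weight `exp(-x⁴/4 - t x²)`). -/
theorem painleveIV_from_freud (n : ℕ) (hn : 1 ≤ n) (u : ℕ → ℝ → ℝ)
    (hu0 : n = 1 → ∀ t, u 0 t = 0)
    (hne : ∀ t, u n t ≠ 0)
    (hdiff : ∀ k ∈ Finset.Icc (n - 1) (n + 1), Differentiable ℝ (u k))
    (hstring : ∀ t : ℝ, ∀ k ∈ Finset.Icc (n - 1) (n + 1),
      u k t * (u (k - 1) t + u k t + u (k + 1) t) + 2 * t * u k t = k)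
    (hflow : ∀ t : ℝ, ∀ k ∈ Finset.Icc (n - 1) (n + 1),
      deriv (u k) t = u k t * (u (k - 1) t - u (k + 1) t)) :
    ∀ t : ℝ, deriv (deriv (u n)) t =
      (deriv (u n) t) ^ 2 / (2 * u n t) +
        (1 / (2 * u n t)) * (3 * (u n t) ^ 2 + 2 * t * u n t - n) *
          ((u n t) ^ 2 + 2 * t * u n t + n) :=
  painleveIV_from_freud_general n hn u hne hdiff hstring hflow
end

section
/- Fix n ≥ 1 and let a_n(t), b_n(t), b_{n-1}(t) be differentiable functions with a_n nowhere zero, satisfying the Laguerre–Freud relations n + a_n^2 (b_n + b_{n-1}) = 0, plus the differential system a_n'/a_n = b_n + n/(2 a_n^2) and b_n' = -b_n^2 - 2 a_n^2 - t. Then b_n satisfies the second Painlevé-type equation b_n'' = 2 b_n^3 + 2 t b_n - (2n + 1). -/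
/-- Section 6: the recurrence coefficient `b_n` for the weight `exp(x³/3 + t x)`
satisfies the Painlevé II type equation `b_n'' = 2 b_n³ + 2 t b_n - (2n+1)`. -/
theorem painleveII_for_b (n : ℕ) (hn : 1 ≤ n) (a b c : ℝ → ℝ)
    (ha : Differentiable ℝ a) (hb : Differentiable ℝ b)
    (hne : ∀ t, a t ≠ 0)
    (hLF : ∀ t, (n : ℝ) + (a t) ^ 2 * (b t + c t) = 0)
    (hA : ∀ t, deriv a t = a t * (b t + (n : ℝ) / (2 * (a t) ^ 2)))
    (hB : ∀ t, deriv b t = -(b t) ^ 2 - 2 * (a t) ^ 2 - t) :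
    ∀ t, deriv (deriv b) t = 2 * (b t) ^ 3 + 2 * t * b t - (2 * (n : ℝ) + 1) := by
  intro t
  have hg : deriv b = fun s => -(b s) ^ 2 - 2 * (a s) ^ 2 - s := funext hB
  have hb' : HasDerivAt b (deriv b t) t := (hb t).hasDerivAt
  have ha' : HasDerivAt a (deriv a t) t := (ha t).hasDerivAt
  have H : HasDerivAt (fun s => -(b s) ^ 2 - 2 * (a s) ^ 2 - s)
      (-(2 * b t ^ 1 * deriv b t) - 2 * (2 * a t ^ 1 * deriv a t) - 1) t := by
    exact ((hb'.pow 2).neg.sub ((ha'.pow 2).const_mul 2)).sub (hasDerivAt_id t)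
  rw [hg, H.deriv, hA t, hB t]
  field_simp [hne t]
  ring
end

section
/- Fix a complex parameter ν and let a(t) be a twice-differentiable nowhere-zero function satisfying 4 a^3 a'' = (3a^4 + 2t a^2 - ν)(a^4 + 2t a^2 + ν). Fix a sign ε ∈ {+1, -1} and suppose y(t) is a twice-differentiable nowhere-zero function with y^2 = ν/(2a^2) - a^2/2 - t - ε a'/a. Then y satisfies the same equation with ν replaced by ν + ε, i.e. 4 y^3 y'' = (3y^4 + 2t y^2 - (ν+ε))(y^4 + 2t y^2 + (ν+ε)). -/
/-!
Clearing denominators, the hypothesis on `y` reads `2 ε a a' = ν - a⁴ - 2 t a² - 2 a² y²`.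
Differentiating this relation, eliminating `a''` with the equation for `a` and `a a'` with the
relation itself (using `ε² = 1`) yields the Riccati-type identity
`2 y y' = ε (2 a² y² + y⁴ + 2 t y² - ν) - 1`.
Differentiating once more and eliminating `y'` and `a a'` the same way, all terms involving `a`
cancel and the equation for `y` with parameter `ν + ε` remains.
-/

theorem HasDerivAt.unique_of_forall_eq {𝕜 F : Type*} [NontriviallyNormedField 𝕜]
    [NormedAddCommGroup F] [NormedSpace 𝕜 F] {f g : 𝕜 → F} {f' g' : F} {x : 𝕜}
    (hf : HasDerivAt f f' x) (h : ∀ x, f x = g x) (hg : HasDerivAt g g' x) : f' = g' :=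
  (funext h ▸ hf).unique hg

namespace Schlesinger

def freudRHS {R : Type*} [CommRing R] (ν t a : R) : R :=
  (3 * a ^ 4 + 2 * t * a ^ 2 - ν) * (a ^ 4 + 2 * t * a ^ 2 + ν)

section Algebra

variable {K : Type*} [Field K] [CharZero K]

theorem relation_of_sq_eq {ν s t a a' y : K} (ha : a ≠ 0)
    (hy : y ^ 2 = ν / (2 * a ^ 2) - a ^ 2 / 2 - t - s * a' / a) :
    2 * s * a * a' = ν - a ^ 4 - 2 * t * a ^ 2 - 2 * a ^ 2 * y ^ 2 := by
  field_simp at hy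
  linear_combination hy

theorem riccati_of_relation {ν s t a a' a'' y y' : K} (hs : s ^ 2 = 1) (ha : a ≠ 0)
    (hfreud : 4 * a ^ 3 * a'' = freudRHS ν t a)
    (hrel : 2 * s * a * a' = ν - a ^ 4 - 2 * t * a ^ 2 - 2 * a ^ 2 * y ^ 2)
    (hrel' : 2 * s * (a' ^ 2 + a * a'') = -(4 * a ^ 3 * a' + 2 * a ^ 2 + 4 * t * a * a'
      + 4 * a * a' * y ^ 2 + 4 * a ^ 2 * y * y')) :
    2 * y * y' = s * (2 * a ^ 2 * y ^ 2 + y ^ 4 + 2 * t * y ^ 2 - ν) - 1 := by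
  have h2aa' : 2 * a * a' = s * (ν - a ^ 4 - 2 * t * a ^ 2 - 2 * a ^ 2 * y ^ 2) := by
    linear_combination s * hrel - 2 * a * a' * hs
  refine mul_left_cancel₀ (pow_ne_zero 4 ha) ?_
  unfold freudRHS at hfreud
  linear_combination (a ^ 2 / 2) * hrel' - (s / 4) * hfreud
    - (s / 4 * (2 * a * a' + s * (ν - a ^ 4 - 2 * t * a ^ 2 - 2 * a ^ 2 * y ^ 2))
      + a ^ 2 * (a ^ 2 + t + y ^ 2)) * h2aa'
    - s / 4 * (ν - a ^ 4 - 2 * t * a ^ 2 - 2 * a ^ 2 * y ^ 2) ^ 2 * hs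

end Algebra

theorem freud_of_riccati {R : Type*} [CommRing R] {ν s t a a' y y' y'' : R} (hs : s ^ 2 = 1)
    (hrel : 2 * s * a * a' = ν - a ^ 4 - 2 * t * a ^ 2 - 2 * a ^ 2 * y ^ 2)
    (hric : 2 * y * y' = s * (2 * a ^ 2 * y ^ 2 + y ^ 4 + 2 * t * y ^ 2 - ν) - 1)
    (hric' : 2 * (y' ^ 2 + y * y'') = s * (4 * a * a' * y ^ 2 + 4 * a ^ 2 * y * y'
      + 4 * y ^ 3 * y' + 2 * y ^ 2 + 4 * t * y * y')) :
    4 * y ^ 3 * y'' = freudRHS (ν + s) t y := by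
  unfold freudRHS
  linear_combination 2 * y ^ 2 * hric' + 4 * y ^ 4 * hrel
    - (2 * y * y' + s * (2 * a ^ 2 * y ^ 2 + y ^ 4 + 2 * t * y ^ 2 - ν) - 1
      - 4 * s * y ^ 2 * (a ^ 2 + y ^ 2 + t)) * hric
    + ((y ^ 4 + 2 * (a ^ 2 + t) * y ^ 2) * (3 * y ^ 4 + 2 * (a ^ 2 + t) * y ^ 2)
      - 2 * ν * y ^ 4 + 1 - ν ^ 2) * hs

section Calculus

variable {s ν : ℂ} {a y : ℝ → ℂ}

theorem hasDerivAt_ofReal_id (t : ℝ) : HasDerivAt (fun x : ℝ => (x : ℂ)) 1 t := by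
  simpa using (hasDerivAt_id t).ofReal_comp

theorem relation_deriv_eq (ha1 : Differentiable ℝ a) (ha2 : Differentiable ℝ (deriv a))
    (hy1 : Differentiable ℝ y)
    (hrel : ∀ t : ℝ,
      2 * s * a t * deriv a t = ν - a t ^ 4 - 2 * t * a t ^ 2 - 2 * a t ^ 2 * y t ^ 2)
    (t : ℝ) :
    2 * s * (deriv a t ^ 2 + a t * deriv (deriv a) t) = -(4 * a t ^ 3 * deriv a t + 2 * a t ^ 2
      + 4 * t * a t * deriv a t + 4 * a t * deriv a t * y t ^ 2
      + 4 * a t ^ 2 * y t * deriv y t) := by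
  have ha := (ha1 t).hasDerivAt
  have hy := (hy1 t).hasDerivAt
  have key := ((ha.const_mul (2 * s)).mul (ha2 t).hasDerivAt).unique_of_forall_eq hrel
    ((((hasDerivAt_const t ν).sub (ha.fun_pow 4)).sub
      (((hasDerivAt_ofReal_id t).const_mul 2).mul (ha.fun_pow 2))).sub
      (((ha.fun_pow 2).const_mul 2).mul (hy.fun_pow 2)))
  linear_combination key

theorem riccati_deriv_eq (ha1 : Differentiable ℝ a) (hy1 : Differentiable ℝ y)
    (hy2 : Differentiable ℝ (deriv y))
    (hric : ∀ t : ℝ, 2 * y t * deriv y t =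
      s * (2 * a t ^ 2 * y t ^ 2 + y t ^ 4 + 2 * t * y t ^ 2 - ν) - 1)
    (t : ℝ) :
    2 * (deriv y t ^ 2 + y t * deriv (deriv y) t) = s * (4 * a t * deriv a t * y t ^ 2
      + 4 * a t ^ 2 * y t * deriv y t + 4 * y t ^ 3 * deriv y t + 2 * y t ^ 2
      + 4 * t * y t * deriv y t) := by
  have ha := (ha1 t).hasDerivAt
  have hy := (hy1 t).hasDerivAt
  have key := ((hy.const_mul 2).mul (hy2 t).hasDerivAt).unique_of_forall_eq hric
    ((((((((ha.fun_pow 2).const_mul 2).mul (hy.fun_pow 2)).add (hy.fun_pow 4)).add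
      (((hasDerivAt_ofReal_id t).const_mul 2).mul (hy.fun_pow 2))).sub
      (hasDerivAt_const t ν)).const_mul s).sub (hasDerivAt_const t 1))
  linear_combination key

end Calculus

end Schlesinger

theorem schlesinger_transformation_general (ν : ℂ) (ε : ℝ) (hε : ε = 1 ∨ ε = -1)
    (a y : ℝ → ℂ)
    (ha1 : Differentiable ℝ a) (ha2 : Differentiable ℝ (deriv a))
    (hane : ∀ t, a t ≠ 0)
    (hy1 : Differentiable ℝ y) (hy2 : Differentiable ℝ (deriv y))
    (heq : ∀ t : ℝ, 4 * (a t) ^ 3 * deriv (deriv a) t =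
      (3 * (a t) ^ 4 + 2 * (t : ℂ) * (a t) ^ 2 - ν) *
        ((a t) ^ 4 + 2 * (t : ℂ) * (a t) ^ 2 + ν))
    (hy : ∀ t : ℝ, (y t) ^ 2 =
      ν / (2 * (a t) ^ 2) - (a t) ^ 2 / 2 - (t : ℂ) - (ε : ℂ) * deriv a t / a t) :
    ∀ t : ℝ, 4 * (y t) ^ 3 * deriv (deriv y) t =
      (3 * (y t) ^ 4 + 2 * (t : ℂ) * (y t) ^ 2 - (ν + (ε : ℂ))) *
        ((y t) ^ 4 + 2 * (t : ℂ) * (y t) ^ 2 + (ν + (ε : ℂ))) := by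
  have hs : (ε : ℂ) ^ 2 = 1 := by rcases hε with rfl | rfl <;> norm_num
  have hrel (t : ℝ) := Schlesinger.relation_of_sq_eq (hane t) (hy t)
  have hric (t : ℝ) := Schlesinger.riccati_of_relation hs (hane t) (heq t) (hrel t)
    (Schlesinger.relation_deriv_eq ha1 ha2 hy1 hrel t)
  intro t
  exact Schlesinger.freud_of_riccati hs (hrel t) (hric t)
    (Schlesinger.riccati_deriv_eq ha1 hy1 hy2 hric t)

/-- Schlesinger/Bäcklund transformation (37): if `4 a³ a'' = (3a⁴+2ta²-ν)(a⁴+2ta²+ν)`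
and `y² = ν/(2a²) - a²/2 - t - ε a'/a` with `ε = ±1`, then `y` satisfies the same
equation with `ν` replaced by `ν + ε`. -/
theorem schlesinger_transformation (ν : ℂ) (ε : ℝ) (hε : ε = 1 ∨ ε = -1)
    (a y : ℝ → ℂ)
    (ha1 : Differentiable ℝ a) (ha2 : Differentiable ℝ (deriv a))
    (hane : ∀ t, a t ≠ 0)
    (hy1 : Differentiable ℝ y) (hy2 : Differentiable ℝ (deriv y))
    (hyne : ∀ t, y t ≠ 0)
    (heq : ∀ t : ℝ, 4 * (a t) ^ 3 * deriv (deriv a) t =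
      (3 * (a t) ^ 4 + 2 * (t : ℂ) * (a t) ^ 2 - ν) *
        ((a t) ^ 4 + 2 * (t : ℂ) * (a t) ^ 2 + ν))
    (hy : ∀ t : ℝ, (y t) ^ 2 =
      ν / (2 * (a t) ^ 2) - (a t) ^ 2 / 2 - (t : ℂ) - (ε : ℂ) * deriv a t / a t) :
    ∀ t : ℝ, 4 * (y t) ^ 3 * deriv (deriv y) t =
      (3 * (y t) ^ 4 + 2 * (t : ℂ) * (y t) ^ 2 - (ν + (ε : ℂ))) *
        ((y t) ^ 4 + 2 * (t : ℂ) * (y t) ^ 2 + (ν + (ε : ℂ))) :=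
  schlesinger_transformation_general ν ε hε a y ha1 ha2 hane hy1 hy2 heq hy
end

section
/- Fix n ≥ 1, ρ > -1, and t-dependent differentiable functions u_{n-1}, u_n, u_{n+1} with u_n nowhere zero. Assume u_k (u_{k-1} + u_k + u_{k+1} + 2t) = k + (2ρ+1)·odd(k) for k = n-1, n, n+1 (where odd(k) = (1-(-1)^k)/2 and u_0 = 0 if n = 1), together with u_k' = u_k (u_{k-1} - u_{k+1}) for k = n-1, n, n+1. Then u_n satisfies u_n'' = (u_n')^2/(2 u_n) + (3/2) u_n^3 + 4 t u_n^2 + 2( t^2 + n/2 + (2ρ+1)(1 + 3(-1)^n)/4 ) u_n - (n + (2ρ+1)·odd(n))^2 / (2 u_n). -/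
/-! Differentiating the Langmuir flow `u_n' = u_n (u_{n-1} - u_{n+1})` once more expresses `u_n''`
through `u_{n-2}, …, u_{n+2}`. The string equations at `n ∓ 1` eliminate the outer neighbours
`u_{n∓2}`, and the one at `n` gives `u_{n-1} + u_{n+1}` in terms of `u_n`, while `u_n'` carries the
remaining difference `u_{n-1} - u_{n+1}`. What is left is a Painlevé IV equation whose parameter
`α` comes from `r_{n-1} + r_{n+1} - r_n`, where `r_k` is the right-hand side of the string
equation. -/

open Finset

theorem string_langmuir_identity {x a b c y t rm rn rp : ℝ} (hb : b ≠ 0)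
    (hm : a * (x + a + b + 2 * t) = rm) (hn : b * (a + b + c + 2 * t) = rn)
    (hp : c * (b + c + y + 2 * t) = rp) :
    b * (a - c) ^ 2 + b * (a * (x - b) - c * (b - y)) =
      (b * (a - c)) ^ 2 / (2 * b) + 3 / 2 * b ^ 3 + 4 * t * b ^ 2 +
        (rm + rp - rn + 2 * t ^ 2) * b - rn ^ 2 / (2 * b) := by
  subst hm hn hp
  field_simp
  ring

theorem deriv_deriv_of_langmuir {a b c : ℝ → ℝ} {t : ℝ} (ha : DifferentiableAt ℝ a t)
    (hb : DifferentiableAt ℝ b t) (hc : DifferentiableAt ℝ c t)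
    (hflow : ∀ s, deriv b s = b s * (a s - c s)) :
    deriv (deriv b) t = b t * (a t - c t) ^ 2 + b t * (deriv a t - deriv c t) := by
  have hprod : HasDerivAt (fun s => b s * (a s - c s))
      (deriv b t * (a t - c t) + b t * (deriv a t - deriv c t)) t :=
    hb.hasDerivAt.mul (ha.hasDerivAt.sub hc.hasDerivAt)
  rw [show deriv b = fun s => b s * (a s - c s) from funext hflow, hprod.deriv, hflow]
  ring

theorem deriv_deriv_of_string_langmuir (u : ℕ → ℝ → ℝ) (r : ℕ → ℝ) {n : ℕ} (hn : 1 ≤ n)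
    {t : ℝ} (hne : u n t ≠ 0)
    (hdiff : ∀ k ∈ Icc (n - 1) (n + 1), Differentiable ℝ (u k))
    (hstring : ∀ k ∈ Icc (n - 1) (n + 1),
      u k t * (u (k - 1) t + u k t + u (k + 1) t + 2 * t) = r k)
    (hflow : ∀ s, ∀ k ∈ Icc (n - 1) (n + 1),
      deriv (u k) s = u k s * (u (k - 1) s - u (k + 1) s)) :
    deriv (deriv (u n)) t =
      (deriv (u n) t) ^ 2 / (2 * u n t) + 3 / 2 * u n t ^ 3 + 4 * t * u n t ^ 2 +
        (r (n - 1) + r (n + 1) - r n + 2 * t ^ 2) * u n t - r n ^ 2 / (2 * u n t) := by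
  have hprev : n - 1 ∈ Icc (n - 1) (n + 1) := mem_Icc.2 ⟨le_rfl, by omega⟩
  have hcur : n ∈ Icc (n - 1) (n + 1) := mem_Icc.2 ⟨by omega, by omega⟩
  have hnext : n + 1 ∈ Icc (n - 1) (n + 1) := mem_Icc.2 ⟨by omega, le_rfl⟩
  have hsucc : n - 1 + 1 = n := by omega
  have hstring_prev := hstring _ hprev
  have hflow_prev := hflow t _ hprev
  have hstring_next := hstring _ hnext
  have hflow_next := hflow t _ hnext
  rw [hsucc] at hstring_prev hflow_prev
  rw [Nat.add_sub_cancel] at hstring_next hflow_next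
  rw [deriv_deriv_of_langmuir ((hdiff _ hprev) t) ((hdiff _ hcur) t) ((hdiff _ hnext) t)
      (hflow · _ hcur), hflow_prev, hflow_next, hflow t _ hcur]
  exact string_langmuir_identity hne hstring_prev (hstring _ hcur) hstring_next

noncomputable def freudStringRhs (ρ : ℝ) (k : ℕ) : ℝ := k + (2 * ρ + 1) * ((1 - (-1 : ℝ) ^ k) / 2)

theorem freudStringRhs_neighbours (ρ : ℝ) {n : ℕ} (hn : 1 ≤ n) :
    freudStringRhs ρ (n - 1) + freudStringRhs ρ (n + 1) - freudStringRhs ρ n =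
      n + (2 * ρ + 1) * (1 + 3 * (-1 : ℝ) ^ n) / 2 := by
  obtain ⟨m, rfl⟩ := Nat.exists_eq_add_of_le' hn
  simp only [freudStringRhs, Nat.add_sub_cancel, pow_succ]
  push_cast
  ring

theorem painleveIV_generalized_freud_general (n : ℕ) (hn : 1 ≤ n) (ρ : ℝ)
    (u : ℕ → ℝ → ℝ)
    (hne : ∀ t, u n t ≠ 0)
    (hdiff : ∀ k ∈ Finset.Icc (n - 1) (n + 1), Differentiable ℝ (u k))
    (hstring : ∀ t : ℝ, ∀ k ∈ Finset.Icc (n - 1) (n + 1),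
      u k t * (u (k - 1) t + u k t + u (k + 1) t + 2 * t) =
        k + (2 * ρ + 1) * ((1 - (-1 : ℝ) ^ k) / 2))
    (hflow : ∀ t : ℝ, ∀ k ∈ Finset.Icc (n - 1) (n + 1),
      deriv (u k) t = u k t * (u (k - 1) t - u (k + 1) t)) :
    ∀ t : ℝ, deriv (deriv (u n)) t =
      (deriv (u n) t) ^ 2 / (2 * u n t) + (3 / 2) * (u n t) ^ 3 + 4 * t * (u n t) ^ 2 +
        2 * (t ^ 2 + (n : ℝ) / 2 + (2 * ρ + 1) * (1 + 3 * (-1 : ℝ) ^ n) / 4) * u n t -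
        ((n : ℝ) + (2 * ρ + 1) * ((1 - (-1 : ℝ) ^ n) / 2)) ^ 2 / (2 * u n t) := by
  intro t
  rw [deriv_deriv_of_string_langmuir u (freudStringRhs ρ) hn (hne t) hdiff (hstring t) hflow,
    freudStringRhs_neighbours ρ hn, freudStringRhs]
  ring

/-- Section 8: the generalized Freud string equations and Langmuir flow for the weight
`|u|^{2ρ+1} exp(-u⁴/4 - t u²)` imply a fourth Painlevé equation for `u_n = ã_n²`. -/
theorem painleveIV_generalized_freud (n : ℕ) (hn : 1 ≤ n) (ρ : ℝ) (hρ : ρ > -1)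
    (u : ℕ → ℝ → ℝ)
    (hu0 : n = 1 → ∀ t, u 0 t = 0)
    (hne : ∀ t, u n t ≠ 0)
    (hdiff : ∀ k ∈ Finset.Icc (n - 1) (n + 1), Differentiable ℝ (u k))
    (hstring : ∀ t : ℝ, ∀ k ∈ Finset.Icc (n - 1) (n + 1),
      u k t * (u (k - 1) t + u k t + u (k + 1) t + 2 * t) =
        k + (2 * ρ + 1) * ((1 - (-1 : ℝ) ^ k) / 2))
    (hflow : ∀ t : ℝ, ∀ k ∈ Finset.Icc (n - 1) (n + 1),
      deriv (u k) t = u k t * (u (k - 1) t - u (k + 1) t)) :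
    ∀ t : ℝ, deriv (deriv (u n)) t =
      (deriv (u n) t) ^ 2 / (2 * u n t) + (3 / 2) * (u n t) ^ 3 + 4 * t * (u n t) ^ 2 +
        2 * (t ^ 2 + (n : ℝ) / 2 + (2 * ρ + 1) * (1 + 3 * (-1 : ℝ) ^ n) / 4) * u n t -
        ((n : ℝ) + (2 * ρ + 1) * ((1 - (-1 : ℝ) ^ n) / 2)) ^ 2 / (2 * u n t) :=
  painleveIV_generalized_freud_general n hn ρ u hne hdiff hstring hflow
end

section
/- Fix n ≥ 2 and differentiable functions u_{n-2}, ..., u_{n+3} with u_n, u_{n+1} nowhere zero. Assume the flow u_k' = u_k(u_{k-1} - u_{k+1}) for k = n-1, n, n+1, n+2 and the recurrence u_k(u_{k-2}u_{k-1} + u_{k-1}^2 + 2u_{k-1}u_k + u_k^2 + 2u_k u_{k+1} + u_{k-1}u_{k+1} + u_{k+1}^2 + u_{k+1}u_{k+2} + 2t) = k for k = n and k = n+1. Then the quadruple (u_{n-1}, u_n, u_{n+1}, u_{n+2}) satisfies the closed differential system: u_n' = u_n(u_{n-1} - u_{n+1}), u_{n+1}' = u_{n+1}(u_n - u_{n+2}),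 u_{n-1}' = n/u_n - 2t - u_{n-1}^2 - 3u_{n-1}u_n - u_n^2 - 2u_n u_{n+1} - u_{n-1}u_{n+1} - u_{n+1}^2 - u_{n+1}u_{n+2}, and u_{n+2}' = -(n+1)/u_{n+1} + 2t + u_{n+2}^2 + u_n u_{n+2} + 3 u_{n+1} u_{n+2} + u_{n+1}^2 + 2 u_n u_{n+1} + u_n^2 + u_{n-1} u_n. -/
/-- Section 9 (weight `exp(-x⁶ - t x²)`): eliminating `u_{n-2}` and `u_{n+3}` from the
flow equations using the Freud–Laguerre recurrence yields a closed differential system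
for `(u_{n-1}, u_n, u_{n+1}, u_{n+2})`. -/
theorem sextic_freud_closed_system (n : ℕ) (hn : 2 ≤ n) (u : ℕ → ℝ → ℝ)
    (hdiff : ∀ k ∈ Finset.Icc (n - 2) (n + 3), Differentiable ℝ (u k))
    (hne : ∀ t, u n t ≠ 0) (hne' : ∀ t, u (n + 1) t ≠ 0)
    (hflow : ∀ t : ℝ, ∀ k ∈ Finset.Icc (n - 1) (n + 2),
      deriv (u k) t = u k t * (u (k - 1) t - u (k + 1) t))
    (hrec : ∀ t : ℝ, ∀ k ∈ ({n, n + 1} : Finset ℕ),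
      u k t * (u (k - 2) t * u (k - 1) t + (u (k - 1) t) ^ 2 + 2 * u (k - 1) t * u k t +
          (u k t) ^ 2 + 2 * u k t * u (k + 1) t + u (k - 1) t * u (k + 1) t +
          (u (k + 1) t) ^ 2 + u (k + 1) t * u (k + 2) t + 2 * t) = k) :
    ∀ t : ℝ,
      deriv (u n) t = u n t * (u (n - 1) t - u (n + 1) t) ∧
      deriv (u (n + 1)) t = u (n + 1) t * (u n t - u (n + 2) t) ∧
      deriv (u (n - 1)) t =
        (n : ℝ) / u n t - 2 * t - (u (n - 1) t) ^ 2 - 3 * u (n - 1) t * u n t -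
          (u n t) ^ 2 - 2 * u n t * u (n + 1) t - u (n - 1) t * u (n + 1) t -
          (u (n + 1) t) ^ 2 - u (n + 1) t * u (n + 2) t ∧
      deriv (u (n + 2)) t =
        -((n : ℝ) + 1) / u (n + 1) t + 2 * t + (u (n + 2) t) ^ 2 +
          u n t * u (n + 2) t + 3 * u (n + 1) t * u (n + 2) t + (u (n + 1) t) ^ 2 +
          2 * u n t * u (n + 1) t + (u n t) ^ 2 + u (n - 1) t * u n t := by
  obtain ⟨m, rfl⟩ : ∃ m, n = m + 2 := ⟨n - 2, by omega⟩
  intro t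
  have e1 : m + 2 - 1 = m + 1 := rfl
  have e2 : m + 2 - 2 = m := rfl
  have e3 : m + 1 - 1 = m := rfl
  have e4 : m + 2 + 1 - 1 = m + 2 := rfl
  have e5 : m + 2 + 1 - 2 = m + 1 := rfl
  have e6 : m + 2 + 1 + 1 = m + 4 := rfl
  have e7 : m + 2 + 1 + 2 = m + 5 := rfl
  have e8 : m + 2 + 2 - 1 = m + 3 := rfl
  have e9 : m + 2 + 2 + 1 = m + 5 := rfl
  have e10 : m + 2 + 1 = m + 3 := rfl
  have e11 : m + 2 + 2 = m + 4 := rfl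
  have f1 := hflow t (m + 1) (by simp [Finset.mem_Icc])
  have f2 := hflow t (m + 2) (by simp [Finset.mem_Icc])
  have f3 := hflow t (m + 3) (by simp [Finset.mem_Icc])
  have f4 := hflow t (m + 4) (by simp [Finset.mem_Icc])
  have r1 := hrec t (m + 2) (by simp)
  have r2 := hrec t (m + 3) (by simp [e10])
  simp only [e1, e2, e3, e4, e5, e6, e7, e8, e9, e10, e11,
    show m + 1 + 1 = m + 2 from rfl, show m + 3 - 1 = m + 2 from rfl,
    show m + 3 + 1 = m + 4 from rfl, show m + 4 - 1 = m + 3 from rfl,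
    show m + 4 + 1 = m + 5 from rfl, show m + 3 - 2 = m + 1 from rfl,
    show m + 3 + 2 = m + 5 from rfl] at f1 f2 f3 f4 r1 r2 ⊢
  have hne2 := hne t
  have hne3 := hne' t
  refine ⟨f2, f3, ?_, ?_⟩
  · rw [f1]
    field_simp
    push_cast at r1 ⊢
    linear_combination r1
  · rw [f4]
    field_simp
    push_cast at r2 ⊢
    linear_combination -r2
end
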